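/- arXiv:2511.11254 — 2 statements merged into one kernel-verified Lean document; each statement's English description precedes it below -/
import Mathlib

section
/- Let G be a finite group, F a group, (F, G, ◁, ▷) a matched pair, σ, τ cocycle data, and let (k^G τ#_σ kF, R) be a coquasitriangular Hopf algebra. If g, h ∈ G and f, f' ∈ F satisfy f f' ≠ (h ▷ f')(g ▷ f) in F, then R(p_g # f, p_h # f') = 0. -/
/-- A matched pair of groups `(F, G, ◁, ▷)`: `rtr g f = g ▷ f` is an action of the
group `G` on the set `F`, and `ltl g f = g ◁ f` is an action of the group `F` on the
set `G`, satisfying the matched pair compatibility conditions. -/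
structure MatchedPair (F G : Type*) [Group F] [Group G] where
  rtr : G → F → F
  ltl : G → F → G
  one_rtr : ∀ f, rtr 1 f = f
  mul_rtr : ∀ g g' f, rtr (g * g') f = rtr g (rtr g' f)
  ltl_one : ∀ g, ltl g 1 = g
  ltl_mul : ∀ g f f', ltl g (f * f') = ltl (ltl g f) f'
  rtr_mul : ∀ g f f', rtr g (f * f') = rtr g f * rtr (ltl g f) f'
  mul_ltl : ∀ g g' f, ltl (g * g') f = ltl g (rtr g' f) * ltl g' f

/-- Cocycle data `(σ, τ)` for the abelian extension `k^G τ#_σ kF`. -/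
structure CocycleData (k F G : Type*) [Field k] [Group F] [Group G]
    (mp : MatchedPair F G) where
  sig : G → F → F → kˣ
  tau : G → G → F → kˣ
  sig_one_left : ∀ g f, sig g 1 f = 1
  sig_one_right : ∀ g f, sig g f 1 = 1
  one_sig : ∀ f f', sig 1 f f' = 1
  sig_cocycle : ∀ g f f' f'',
    sig (mp.ltl g f) f' f'' * sig g f (f' * f'') = sig g f f' * sig g (f * f') f''
  one_tau : ∀ g f, tau 1 g f = 1
  tau_one : ∀ g f, tau g 1 f = 1
  tau_one_right : ∀ g g', tau g g' 1 = 1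
  tau_cocycle : ∀ g g' g'' f,
    tau g g' (mp.rtr g'' f) * tau (g * g') g'' f = tau g (g' * g'') f * tau g' g'' f
  compat : ∀ g g' f f',
    sig (g * g') f f' * tau g g' (f * f')
      = sig g (mp.rtr g' f) (mp.rtr (mp.ltl g' f) f') * sig g' f f' * tau g g' f
        * tau (mp.ltl g (mp.rtr g' f)) (mp.ltl g' f) f'

/-- The product `(p_g # f)(p_{g'} # f') = δ_{g ◁ f, g'} σ(g; f, f') p_g # (f f')` of two
basis elements of `H = k^G τ#_σ kF`, as an element of `H` (realized as `(G × F) →₀ k`). -/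
noncomputable def mulB {k F G : Type*} [Field k] [Group F] [Group G] [DecidableEq G]
    (mp : MatchedPair F G) (cd : CocycleData k F G mp) (i j : G × F) : (G × F) →₀ k :=
  if mp.ltl i.1 i.2 = j.1 then
    Finsupp.single (i.1, i.2 * j.2) ((cd.sig i.1 i.2 j.2 : kˣ) : k)
  else 0

/-- `R` (given by its values `R g f h f' = R(p_g # f, p_h # f')` on the basis
`{p_g # f}` of `H = k^G τ#_σ kF`) is a coquasitriangular structure on `H`:
it is convolution invertible, satisfies `R(a, bc) = Σ R(a₁, c) R(a₂, b)` and
`R(ab, c) = Σ R(a, c₁) R(b, c₂)`, and the quasi-commutativity axiom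
`Σ R(a₁, b₁) a₂ b₂ = Σ b₁ a₁ R(a₂, b₂)`, all expressed on basis elements using
`Δ(p_g # f) = Σ_x τ(g x⁻¹, x; f) (p_{g x⁻¹} # (x ▷ f)) ⊗ (p_x # f)` and
`ε(p_g # f) = δ_{g,1}`. -/
structure IsCQT {k F G : Type*} [Field k] [Group F] [Group G] [Fintype G] [DecidableEq G]
    (mp : MatchedPair F G) (cd : CocycleData k F G mp)
    (R : G → F → G → F → k) : Prop where
  conv_inv : ∃ R' : G → F → G → F → k,
    (∀ (g h : G) (f f' : F),
      ∑ x : G, ∑ y : G,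
        ((cd.tau (g * x⁻¹) x f : kˣ) : k) * ((cd.tau (h * y⁻¹) y f' : kˣ) : k) *
          R (g * x⁻¹) (mp.rtr x f) (h * y⁻¹) (mp.rtr y f') * R' x f y f'
        = (if g = 1 then (1 : k) else 0) * (if h = 1 then (1 : k) else 0)) ∧
    (∀ (g h : G) (f f' : F),
      ∑ x : G, ∑ y : G,
        ((cd.tau (g * x⁻¹) x f : kˣ) : k) * ((cd.tau (h * y⁻¹) y f' : kˣ) : k) *
          R' (g * x⁻¹) (mp.rtr x f) (h * y⁻¹) (mp.rtr y f') * R x f y f'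
        = (if g = 1 then (1 : k) else 0) * (if h = 1 then (1 : k) else 0))
  cqt1 : ∀ (g h l : G) (f f' f'' : F),
    (if mp.ltl h f' = l then (1 : k) else 0) * ((cd.sig h f' f'' : kˣ) : k)
        * R g f h (f' * f'')
      = ∑ x : G, ((cd.tau (g * x⁻¹) x f : kˣ) : k)
          * R (g * x⁻¹) (mp.rtr x f) l f'' * R x f h f'
  cqt2 : ∀ (g h l : G) (f f' f'' : F),
    (if mp.ltl g f = h then (1 : k) else 0) * ((cd.sig g f f' : kˣ) : k)
        * R g (f * f') l f''
      = ∑ x : G, ((cd.tau (l * x⁻¹) x f'' : kˣ) : k)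
          * R g f (l * x⁻¹) (mp.rtr x f'') * R h f' x f''
  qcomm : ∀ (g h : G) (f f' : F),
    (∑ x : G, ∑ y : G,
      (((cd.tau (g * x⁻¹) x f : kˣ) : k) * ((cd.tau (h * y⁻¹) y f' : kˣ) : k) *
        R (g * x⁻¹) (mp.rtr x f) (h * y⁻¹) (mp.rtr y f')) • mulB mp cd (x, f) (y, f'))
      = ∑ x : G, ∑ y : G,
        (((cd.tau (g * x⁻¹) x f : kˣ) : k) * ((cd.tau (h * y⁻¹) y f' : kˣ) : k) *
          R x f y f') • mulB mp cd (h * y⁻¹, mp.rtr y f') (g * x⁻¹, mp.rtr x f)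

/-
Evaluate the quasi-commutativity axiom `Σ R(a₁, b₁) a₂ b₂ = Σ b₁ a₁ R(a₂, b₂)` for
`a = p_g # f`, `b = p_h # f'` at the basis coordinate `p_1 # q`.  A product
`(p_x # u)(p_y # v)` has a nonzero `p_1`-coordinate only when `x = y = 1`, where it is
`p_1 # uv` with coefficient `σ(1; u, v) = 1`.  On the left this singles out the term
`x = y = 1` of the coproducts, giving `R(p_g # f, p_h # f')` when `q = f f'`; on the right
it singles out `x = g`, `y = h`, giving the same value when `q = (h ▷ f')(g ▷ f)`.
Taking `q = (h ▷ f')(g ▷ f) ≠ f f'` forces `R(p_g # f, p_h # f') = 0`.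
-/

namespace MatchedPair

variable {F G : Type*} [Group F] [Group G]

theorem one_ltl (mp : MatchedPair F G) (f : F) : mp.ltl 1 f = 1 := by
  have h := mp.mul_ltl 1 1 f
  rw [one_mul, mp.one_rtr] at h
  exact left_eq_mul.mp h

end MatchedPair

section

variable {k F G : Type*} [Field k] [Group F] [Group G] [DecidableEq G]
  (mp : MatchedPair F G) (cd : CocycleData k F G mp)

open Classical in
theorem mulB_apply_one_fst (i j : G × F) (q : F) :
    mulB mp cd i j (1, q) = if i.1 = 1 ∧ j.1 = 1 ∧ i.2 * j.2 = q then 1 else 0 := by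
  obtain ⟨x, u⟩ := i
  obtain ⟨y, v⟩ := j
  by_cases hx : x = 1
  · subst hx
    simp only [mulB, mp.one_ltl, cd.one_sig, Units.val_one]
    split_ifs <;> simp_all [eq_comm]
  · simp only [mulB]
    split_ifs <;> simp_all

end

open Classical in
theorem IsCQT.qcomm_apply_one {k F G : Type*} [Field k] [Group F] [Group G] [Fintype G]
    [DecidableEq G] {mp : MatchedPair F G} {cd : CocycleData k F G mp}
    {R : G → F → G → F → k} (hR : IsCQT mp cd R) (g h : G) (f f' q : F) :
    (if f * f' = q then R g f h f' else 0)
      = if mp.rtr h f' * mp.rtr g f = q then R g f h f' else 0 := by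
  have key := congrArg (fun v : (G × F) →₀ k => v (1, q)) (hR.qcomm g h f f')
  simp only [Finsupp.finsetSum_apply, Finsupp.smul_apply, smul_eq_mul,
    mulB_apply_one_fst, mul_inv_eq_one] at key
  simpa [ite_and, eq_comm, Finset.sum_ite_eq, Finset.sum_ite_eq', cd.tau_one, cd.one_tau,
    mp.one_rtr] using key

theorem R_eq_zero_of_ne_general {k F G : Type*} [Field k]
    [Group F] [Group G] [Fintype G] [DecidableEq G]
    (mp : MatchedPair F G) (cd : CocycleData k F G mp)
    (R : G → F → G → F → k) (hR : IsCQT mp cd R)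
    (g h : G) (f f' : F)
    (hne : f * f' ≠ mp.rtr h f' * mp.rtr g f) :
    R g f h f' = 0 := by
  simpa [hne] using (hR.qcomm_apply_one g h f f' (mp.rtr h f' * mp.rtr g f)).symm

/-- If `(k^G τ#_σ kF, R)` is coquasitriangular and `f f' ≠ (h ▷ f')(g ▷ f)` in `F`,
then `R(p_g # f, p_h # f') = 0`. -/
theorem R_eq_zero_of_ne {k F G : Type*} [Field k] [IsAlgClosed k] [CharZero k]
    [Group F] [Group G] [Fintype G] [DecidableEq G]
    (mp : MatchedPair F G) (cd : CocycleData k F G mp)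
    (R : G → F → G → F → k) (hR : IsCQT mp cd R)
    (g h : G) (f f' : F)
    (hne : f * f' ≠ mp.rtr h f' * mp.rtr g f) :
    R g f h f' = 0 :=
  R_eq_zero_of_ne_general mp cd R hR g h f f' hne
end

section
/- Let G be a finite group, F a group, (F, G, ◁, ▷) a matched pair with ◁ trivial (g ◁ f = g for all g ∈ G, f ∈ F, i.e. the abelian extension is central), σ, τ cocycle data, and let (k^G τ#_σ kF, R) be a coquasitriangular Hopf algebra. Set S = {f ∈ F : g ▷ f = f for all g ∈ G}. Suppose that for every f ∈ F, every simple right comodule over the coalgebra k^{G_f}_{τ_f} is 1-dimensional. Then: (a) σ(g; f, f') = σ(g; f', f) for all g ∈ G and f, f' ∈ S, and (b) S is an abelian subgroup of F (in particular f f' = f' f for all f, f' ∈ S). -/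
/-!
For `f ∈ S` we have `G_f = G`, and a simple `k^G_{τ_f}`-comodule is an irreducible projective
representation of `G` with multiplier `τ(·, ·; f)`; so all of these are one-dimensional.
Splitting off invariant subspaces, every projective representation is then triangular with
commuting diagonal blocks, hence `(ρ u ρ w - ρ w ρ u) ρ (w u)⁻¹`, which is
`τ(u, w) τ(uw, (wu)⁻¹) ρ(uw(wu)⁻¹) - τ(w, u) τ(wu, (wu)⁻¹)`, is nilpotent. In the twisted regular
representation `ρ g` has trace `|G| δ_{g,1}`, so in characteristic zero the vanishing trace
forces `uw = wu` and `τ(u, w; f) = τ(w, u; f)`.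

For `f, f' ∈ S` and a central extension, evaluating the quasi-commutativity axiom at
`p_c # f f'` shows that `τ(a, c; f) τ(b, c; f') R(p_a # f, p_b # f') σ(c; f, f')` vanishes unless
`f' f = f f'`, and otherwise (for `G` abelian) equals
`τ(c, a; f) τ(c, b; f') R(p_a # f, p_b # f') σ(c; f', f)`. Convolution invertibility makes some
`R(p_a # f, p_b # f')` nonzero, whence `f f' = f' f` and, by the symmetry of `τ`,
`σ(c; f, f') = σ(c; f', f)`.
-/

open Module

lemma Module.End.isNilpotent_of_restrict_of_mapQ {R M : Type*} [Ring R] [AddCommGroup M]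
    [Module R M] {f : End R M} {p : Submodule R M} (hp : p ≤ p.comap f)
    (hres : IsNilpotent (f.restrict hp)) (hquot : IsNilpotent (p.mapQ p f hp)) :
    IsNilpotent f := by
  obtain ⟨a, ha⟩ := hres
  obtain ⟨b, hb⟩ := hquot
  refine ⟨a + b, LinearMap.ext fun x => ?_⟩
  have hx : (f ^ b) x ∈ p := by
    rw [← Submodule.Quotient.mk_eq_zero, ← Submodule.mapQ_apply p p (f ^ b)
      (h := p.le_comap_pow_of_le_comap hp b), Submodule.mapQ_pow p hp, hb]
    rfl
  have := congrArg (fun g => (g ⟨_, hx⟩ : p).1) ha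
  rw [Module.End.pow_restrict] at this
  simpa [pow_add, LinearMap.restrict_apply] using this

lemma Module.End.commute_of_finrank_eq_one {R M : Type*} [CommSemiring R] [StrongRankCondition R]
    [AddCommMonoid M] [Module R M] [Module.Free R M] (h : finrank R M = 1) (f g : End R M) :
    Commute f g := by
  obtain ⟨a, rfl, -⟩ := f.existsUnique_eq_smul_id_of_finrank_eq_one h
  obtain ⟨b, rfl, -⟩ := g.existsUnique_eq_smul_id_of_finrank_eq_one h
  exact ((Commute.refl LinearMap.id).smul_left a).smul_right b

section ProjectiveRep

variable {k G : Type*} [Field k] [Group G]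

structure IsProjectiveRep {A : Type*} [Ring A] [Algebra k A] (T : G → G → k) (ρ : G → A) :
    Prop where
  map_one : ρ 1 = 1
  map_mul : ∀ x y, ρ x * ρ y = T x y • ρ (x * y)

def IrreducibleProjRepsAreOneDim (T : G → G → k) : Prop :=
  ∀ (n : ℕ) (ρ : G → Matrix (Fin n) (Fin n) k), IsProjectiveRep T ρ → 0 < n →
    (∀ U : Submodule k (Fin n → k), (∀ v ∈ U, ∀ g, (ρ g).mulVec v ∈ U) → U = ⊥ ∨ U = ⊤) →
    n = 1

namespace IsProjectiveRep

variable {T : G → G → k}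

lemma map {A B : Type*} [Ring A] [Algebra k A] [Ring B] [Algebra k B] {ρ : G → A}
    (hρ : IsProjectiveRep T ρ) (φ : A →ₐ[k] B) : IsProjectiveRep T (φ ∘ ρ) where
  map_one := by simp [hρ.map_one]
  map_mul x y := by
    change φ (ρ x) * φ (ρ y) = T x y • φ (ρ (x * y))
    rw [← _root_.map_mul, hρ.map_mul, map_smul]

variable {V : Type*} [AddCommGroup V] [Module k V] {ρ : G → End k V}

lemma restrict (hρ : IsProjectiveRep T ρ) {U : Submodule k V} (hU : ∀ g, U ≤ U.comap (ρ g)) :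
    IsProjectiveRep T fun g => (ρ g).restrict (hU g) where
  map_one := by ext; simp [LinearMap.restrict_apply, hρ.map_one]
  map_mul x y := by ext v; simpa using LinearMap.congr_fun (hρ.map_mul x y) v

lemma mapQ (hρ : IsProjectiveRep T ρ) {U : Submodule k V} (hU : ∀ g, U ≤ U.comap (ρ g)) :
    IsProjectiveRep T fun g => U.mapQ U (ρ g) (hU g) where
  map_one := by ext; simp [hρ.map_one]
  map_mul x y := by
    ext v
    simpa using congrArg U.mkQ (LinearMap.congr_fun (hρ.map_mul x y) v)

lemma finrank_eq_one_of_irreducible [FiniteDimensional k V] (hT : IrreducibleProjRepsAreOneDim T)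
    (hρ : IsProjectiveRep T ρ) (hV : 0 < finrank k V)
    (hirr : ∀ U : Submodule k V, (∀ g, U ≤ U.comap (ρ g)) → U = ⊥ ∨ U = ⊤) :
    finrank k V = 1 := by
  let e := (finBasis k V).equivFun
  let φ : End k V ≃ₐ[k] Matrix (Fin (finrank k V)) (Fin (finrank k V)) k :=
    (e.conjAlgEquiv k).trans Matrix.toLinAlgEquiv'.symm
  have hφ (f : End k V) (v) : (φ f).mulVec v = e (f (e.symm v)) := by
    change Matrix.toLinAlgEquiv' (Matrix.toLinAlgEquiv'.symm _) v = _
    rw [AlgEquiv.apply_symm_apply]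
    rfl
  refine hT _ _ (hρ.map φ.toAlgHom) hV fun U hU => ?_
  have hUinv (g : G) : U.comap e.toLinearMap ≤ (U.comap e.toLinearMap).comap (ρ g) := by
    intro v hv
    simpa [hφ] using hU (e v) hv g
  exact (hirr _ hUinv).imp (map_eq_bot_iff (Submodule.orderIsoMapComap e).symm).1
    (map_eq_top_iff (Submodule.orderIsoMapComap e).symm).1

theorem isNilpotent_commutator_mul [FiniteDimensional k V] (hT : IrreducibleProjRepsAreOneDim T)
    (hρ : IsProjectiveRep T ρ) (u w z : G) : IsNilpotent ((ρ u * ρ w - ρ w * ρ u) * ρ z) := by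
  induction hd : finrank k V using Nat.strong_induction_on generalizing V with
  | _ d ih =>
  by_cases hred : ∃ U : Submodule k V, (∀ g, U ≤ U.comap (ρ g)) ∧ U ≠ ⊥ ∧ U ≠ ⊤
  · obtain ⟨U, hU, hbot, htop⟩ := hred
    have hN : U ≤ U.comap ((ρ u * ρ w - ρ w * ρ u) * ρ z) := fun v hv =>
      U.sub_mem (hU u (hU w (hU z hv))) (hU w (hU u (hU z hv)))
    refine Module.End.isNilpotent_of_restrict_of_mapQ hN ?_ ?_
    · convert ih _ (hd ▸ Submodule.finrank_lt htop) (hρ.restrict hU) rfl using 1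
      ext; simp [LinearMap.restrict_apply]
    · have := Submodule.finrank_quotient_add_finrank U
      have := Submodule.one_le_finrank_iff.mpr hbot
      convert ih _ (by omega) (hρ.mapQ hU) rfl using 1
      ext; simp
  · push Not at hred
    rcases (finrank k V).eq_zero_or_pos with h0 | hpos
    · have := Module.finrank_zero_iff.mp h0
      exact ⟨1, Subsingleton.elim _ _⟩
    · have h1 := hρ.finrank_eq_one_of_irreducible hT hpos fun U hU =>
        or_iff_not_imp_left.2 (hred U hU)
      rw [(Module.End.commute_of_finrank_eq_one h1 (ρ u) (ρ w)).eq, sub_self, zero_mul]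
      exact IsNilpotent.zero

end IsProjectiveRep

end ProjectiveRep

section TwistedRegular

variable {k G : Type*} [Field k] [Group G] [Fintype G] [DecidableEq G] {T : G → G → k}

variable (T) in
def twistedRegular (g : G) : Matrix G G k :=
  Matrix.of fun z x => if z = g * x then T g x else 0

lemma isProjectiveRep_twistedRegular (hT1 : ∀ x, T 1 x = 1)
    (hTc : ∀ x y z, T x y * T (x * y) z = T x (y * z) * T y z) :
    IsProjectiveRep T (twistedRegular T) where
  map_one := by ext z x; simp [twistedRegular, Matrix.one_apply, hT1]
  map_mul x y := by
    ext z s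
    rw [Matrix.mul_apply, Finset.sum_eq_single (y * s)]
    · by_cases hz : z = x * (y * s) <;>
        simp [twistedRegular, hz, mul_assoc, ← hTc, mul_comm]
    · intro t _ ht
      simp [twistedRegular, ht]
    · simp

lemma trace_twistedRegular (hT1 : ∀ x, T 1 x = 1) (g : G) :
    (twistedRegular T g).trace = if g = 1 then (Fintype.card G : k) else 0 := by
  split_ifs with hg
  · simp [Matrix.trace, twistedRegular, hg, hT1]
  · simp [Matrix.trace, twistedRegular, hg]

theorem commute_and_symm_of_irreducibleProjRepsAreOneDim [CharZero k] (hT1 : ∀ x, T 1 x = 1)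
    (hTc : ∀ x y z, T x y * T (x * y) z = T x (y * z) * T y z) (hT0 : ∀ x y, T x y ≠ 0)
    (hT : IrreducibleProjRepsAreOneDim T) (u w : G) : u * w = w * u ∧ T u w = T w u := by
  have hρ := isProjectiveRep_twistedRegular hT1 hTc
  have hnil : IsNilpotent ((twistedRegular T u * twistedRegular T w -
      twistedRegular T w * twistedRegular T u) * twistedRegular T (w * u)⁻¹) := by
    have := (hρ.map Matrix.toLinAlgEquiv'.toAlgHom).isNilpotent_commutator_mul hT u w (w * u)⁻¹
    simpa [← map_mul, ← map_sub] using this.map Matrix.toLinAlgEquiv'.symm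
  have htr := (Matrix.isNilpotent_trace_of_isNilpotent hnil).eq_zero
  rw [sub_mul, hρ.map_mul, hρ.map_mul, smul_mul_assoc, smul_mul_assoc, hρ.map_mul, hρ.map_mul,
    mul_inv_cancel, Matrix.trace_sub, Matrix.trace_smul, Matrix.trace_smul, Matrix.trace_smul,
    Matrix.trace_smul, trace_twistedRegular hT1, trace_twistedRegular hT1] at htr
  have hcard : (Fintype.card G : k) ≠ 0 := Nat.cast_ne_zero.2 Fintype.card_ne_zero
  by_cases h : u * w = w * u
  · refine ⟨h, ?_⟩
    rw [h, mul_inv_cancel, if_pos rfl, ← sub_smul, smul_eq_zero] at htr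
    simpa [sub_eq_zero, hT0, hcard] using htr
  · rw [if_neg (mt mul_inv_eq_one.1 h), if_pos rfl] at htr
    simp [hT0, hcard] at htr

end TwistedRegular

namespace MatchedPair

variable {F G : Type*} [Group F] [Group G] (mp : MatchedPair F G)

lemma rtr_one (x : G) : mp.rtr x 1 = 1 := by
  have h := mp.rtr_mul x 1 1
  rwa [one_mul, mp.ltl_one, left_eq_mul] at h

def fixedSubgroup : Subgroup F where
  carrier := {f | ∀ x, mp.rtr x f = f}
  one_mem' := mp.rtr_one
  mul_mem' {a b} ha hb x := by rw [mp.rtr_mul, ha, hb]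
  inv_mem' {a} ha x := by
    have h := mp.rtr_mul x a⁻¹ a
    rw [inv_mul_cancel, mp.rtr_one, ha] at h
    exact eq_inv_of_mul_eq_one_left h.symm

end MatchedPair

namespace IsCQT

variable {k F G : Type*} [Field k] [Group F] [Group G] [Fintype G] [DecidableEq G]
  {mp : MatchedPair F G} {cd : CocycleData k F G mp} {R : G → F → G → F → k}

lemma exists_apply_ne_zero (hR : IsCQT mp cd R) (f f' : F) :
    ∃ x y : G, R x⁻¹ (mp.rtr x f) y⁻¹ (mp.rtr y f') ≠ 0 := by
  obtain ⟨R', hR', -⟩ := hR.conv_inv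
  have h := hR' 1 1 f f'
  by_contra! h0
  simp [h0] at h

open scoped Classical in
lemma qcomm_apply_of_fixed (hR : IsCQT mp cd R) (hltl : ∀ x u, mp.ltl x u = x) {f f' : F}
    (hf : ∀ x, mp.rtr x f = f) (hf' : ∀ x, mp.rtr x f' = f') (a b c : G) :
    (cd.tau a c f : k) * cd.tau b c f' * R a f b f' * cd.sig c f f' =
      if f' * f = f * f' then
        (cd.tau c (c⁻¹ * a * c) f : k) * cd.tau c (c⁻¹ * b * c) f' *
          R (c⁻¹ * a * c) f (c⁻¹ * b * c) f' * cd.sig c f' f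
      else 0 := by
  have hq := DFunLike.congr_fun (hR.qcomm (a * c) (b * c) f f') (c, f * f')
  simp only [Finsupp.finsetSum_apply, Finsupp.smul_apply, mulB, hltl, hf, hf',
    apply_ite (fun (Φ : (G × F) →₀ k) => Φ (c, f * f')), Finsupp.single_apply,
    Finsupp.coe_zero, Pi.zero_apply, Prod.mk.injEq, smul_eq_mul, mul_ite, mul_zero, and_true,
    Finset.sum_ite_eq, Finset.mem_univ, if_true] at hq
  have hsupp (x y : G) : (b * c * y⁻¹ = a * c * x⁻¹ ∧ b * c * y⁻¹ = c) ↔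
      (x = c⁻¹ * a * c ∧ y = c⁻¹ * b * c) := by
    constructor
    · rintro ⟨h1, h2⟩
      rw [h2, eq_comm, mul_inv_eq_iff_eq_mul] at h1
      rw [mul_inv_eq_iff_eq_mul] at h2
      exact ⟨by rw [mul_assoc, h1, inv_mul_cancel_left], by rw [mul_assoc, h2, inv_mul_cancel_left]⟩
    · rintro ⟨rfl, rfl⟩
      constructor <;> group
  have hconj (g : G) : g * c * (c⁻¹ * g * c)⁻¹ = c := by group
  simp only [← ite_and, ← and_assoc, hsupp] at hq
  simp only [ite_and, Finset.sum_ite_eq', Finset.mem_univ, if_true, mul_inv_cancel_right] at hq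
  by_cases hcomm : f' * f = f * f'
  · simpa [hcomm, hconj] using hq
  · simpa [hcomm] using hq

lemma commute_of_fixed (hR : IsCQT mp cd R) (hltl : ∀ x u, mp.ltl x u = x) {f f' : F}
    (hf : ∀ x, mp.rtr x f = f) (hf' : ∀ x, mp.rtr x f' = f') : f' * f = f * f' := by
  obtain ⟨x, y, hxy⟩ := hR.exists_apply_ne_zero f f'
  rw [hf x, hf' y] at hxy
  by_contra h
  simpa [h, cd.tau_one, cd.one_sig, hxy] using hR.qcomm_apply_of_fixed hltl hf hf' x⁻¹ y⁻¹ 1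

lemma sig_comm_of_fixed (hR : IsCQT mp cd R) (hltl : ∀ x u, mp.ltl x u = x)
    (hG : ∀ a b : G, a * b = b * a) {f f' : F} (hf : ∀ x, mp.rtr x f = f)
    (hf' : ∀ x, mp.rtr x f' = f') (hτ : ∀ u w, cd.tau u w f = cd.tau w u f)
    (hτ' : ∀ u w, cd.tau u w f' = cd.tau w u f') (g : G) : cd.sig g f f' = cd.sig g f' f := by
  obtain ⟨x, y, hxy⟩ := hR.exists_apply_ne_zero f f'
  rw [hf x, hf' y] at hxy
  have hconj (a : G) : g⁻¹ * a * g = a := by rw [hG g⁻¹ a, inv_mul_cancel_right]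
  have hne : (cd.tau x⁻¹ g f : k) * cd.tau y⁻¹ g f' * R x⁻¹ f y⁻¹ f' ≠ 0 := by simp [hxy]
  refine Units.ext (mul_left_cancel₀ hne ?_)
  simpa [hR.commute_of_fixed hltl hf hf', hconj, hτ _ g, hτ' _ g] using
    hR.qcomm_apply_of_fixed hltl hf hf' x⁻¹ y⁻¹ g

end IsCQT

theorem sigma_symm_and_S_abelian_of_cqt_general {k F G : Type*} [Field k]
    [CharZero k] [Group F] [Group G] [Fintype G] [DecidableEq G]
    (mp : MatchedPair F G) (cd : CocycleData k F G mp)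
    (hltl : ∀ (x : G) (u : F), mp.ltl x u = x)
    (R : G → F → G → F → k) (hR : IsCQT mp cd R)
    (hsimple1dim : ∀ (f : F) (n : ℕ) (a : G → Matrix (Fin n) (Fin n) k),
      a 1 = 1 →
      (∀ u w : G, mp.rtr u f = f → mp.rtr w f = f →
        a u * a w = ((cd.tau u w f : kˣ) : k) • a (u * w)) →
      0 < n →
      (∀ U : Submodule k (Fin n → k),
        (∀ v ∈ U, ∀ u : G, mp.rtr u f = f → (a u).mulVec v ∈ U) → U = ⊥ ∨ U = ⊤) →
      n = 1) :
    (∀ (g : G) (f f' : F), (∀ x : G, mp.rtr x f = f) → (∀ x : G, mp.rtr x f' = f') →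
        cd.sig g f f' = cd.sig g f' f) ∧
      (∃ S : Subgroup F, (S : Set F) = {f : F | ∀ x : G, mp.rtr x f = f} ∧
        ∀ a ∈ S, ∀ b ∈ S, a * b = b * a) := by
  have hτ (f : F) (hf : f ∈ mp.fixedSubgroup) (u w : G) :
      u * w = w * u ∧ cd.tau u w f = cd.tau w u f := by
    have hproj : IrreducibleProjRepsAreOneDim fun u w => (cd.tau u w f : k) :=
      fun n ρ hρ hn hirr => hsimple1dim f n ρ hρ.map_one (fun u w _ _ => hρ.map_mul u w) hn
        fun U hU => hirr U fun v hv u => hU v hv u (hf u)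
    exact (commute_and_symm_of_irreducibleProjRepsAreOneDim (by simp [cd.one_tau])
      (fun x y z => by simpa [hf z] using congrArg Units.val (cd.tau_cocycle x y z f))
      (fun _ _ => Units.ne_zero _) hproj u w).imp_right Units.ext
  have hG (a b : G) : a * b = b * a := (hτ 1 (one_mem _) a b).1
  exact ⟨fun g f f' hf hf' => hR.sig_comm_of_fixed hltl hG hf hf' (fun u w => (hτ f hf u w).2)
      (fun u w => (hτ f' hf' u w).2) g,
    mp.fixedSubgroup, rfl, fun a ha b hb => hR.commute_of_fixed hltl hb ha⟩

/-- Let `(k^G τ#_σ kF, R)` be coquasitriangular with the extension central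
(`g ◁ f = g`), let `S = {f ∈ F : g ▷ f = f for all g ∈ G}`, and suppose that for every
`f ∈ F` every simple right comodule over the coalgebra `k^{G_f}_{τ_f}` (encoded by its
coaction matrices `a : G → Matrix (Fin n) (Fin n) k`, satisfying the comodule axioms on
`G_f` and having no nontrivial invariant subspace) is 1-dimensional. Then
(a) `σ(g; f, f') = σ(g; f', f)` for all `g ∈ G` and `f, f' ∈ S`, and
(b) `S` is an abelian subgroup of `F`. -/
theorem sigma_symm_and_S_abelian_of_cqt {k F G : Type*} [Field k] [IsAlgClosed k]
    [CharZero k] [Group F] [Group G] [Fintype G] [DecidableEq G]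
    (mp : MatchedPair F G) (cd : CocycleData k F G mp)
    (hltl : ∀ (x : G) (u : F), mp.ltl x u = x)
    (R : G → F → G → F → k) (hR : IsCQT mp cd R)
    (hsimple1dim : ∀ (f : F) (n : ℕ) (a : G → Matrix (Fin n) (Fin n) k),
      a 1 = 1 →
      (∀ u w : G, mp.rtr u f = f → mp.rtr w f = f →
        a u * a w = ((cd.tau u w f : kˣ) : k) • a (u * w)) →
      0 < n →
      (∀ U : Submodule k (Fin n → k),
        (∀ v ∈ U, ∀ u : G, mp.rtr u f = f → (a u).mulVec v ∈ U) → U = ⊥ ∨ U = ⊤) →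
      n = 1) :
    (∀ (g : G) (f f' : F), (∀ x : G, mp.rtr x f = f) → (∀ x : G, mp.rtr x f' = f') →
        cd.sig g f f' = cd.sig g f' f) ∧
      (∃ S : Subgroup F, (S : Set F) = {f : F | ∀ x : G, mp.rtr x f = f} ∧
        ∀ a ∈ S, ∀ b ∈ S, a * b = b * a) :=
  sigma_symm_and_S_abelian_of_cqt_general mp cd hltl R hR hsimple1dim
end
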